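/- arXiv:1210.2456 — 4 statements merged into one kernel-verified Lean document; each statement's English description precedes it below -/
import Mathlib

section
/- If e' ∈ PD(e), then for every atom α and action symbol p, Δ_{αp}(e') ⊆ PD(e). Consequently PD(e) is closed under taking partial derivatives. -/
namespace KAT

variable {T A : Type} [DecidableEq A]

/-- Atoms: truth assignments to the primitive tests. -/
abbrev Atom (T : Type) := T → Bool

/-- A guarded string `α₁p₁α₂p₂⋯p_{n-1}αₙ`, as the list of (atom, action)
pairs together with the final atom. -/
structure GStr (T A : Type) where
  pairs : List (Atom T × A)
  last : Atom T

/-- The first atom of a guarded string. -/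
def GStr.first (x : GStr T A) : Atom T :=
  match x.pairs with
  | [] => x.last
  | (α, _) :: _ => α

/-- Fusion product on sets of guarded strings. -/
def fprod (X Y : Set (GStr T A)) : Set (GStr T A) :=
  {z | ∃ x ∈ X, ∃ y ∈ Y, x.last = y.first ∧ z = ⟨x.pairs ++ y.pairs, y.last⟩}

/-- The set of atoms, viewed as guarded strings. -/
def atomsGS : Set (GStr T A) := {z | z.pairs = []}

/-- Fusion powers: `X⁰ = At`, `X^{n+1} = X ⋄ Xⁿ`. -/
def fpow (X : Set (GStr T A)) : ℕ → Set (GStr T A)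
  | 0 => atomsGS
  | n + 1 => fprod X (fpow X n)

/-- `X* = ∪ₙ Xⁿ`. -/
def fstar (X : Set (GStr T A)) : Set (GStr T A) := ⋃ n, fpow X n

/-- Derivative of a set of guarded strings w.r.t. `αp`. -/
def gderiv (α : Atom T) (p : A) (R : Set (GStr T A)) : Set (GStr T A) :=
  {y | (⟨(α, p) :: y.pairs, y.last⟩ : GStr T A) ∈ R}

/-- Boolean expressions over primitive tests `T`. -/
inductive BExp (T : Type) where
  | zero | one
  | test (t : T)
  | not (b : BExp T)
  | or (b₁ b₂ : BExp T)
  | and (b₁ b₂ : BExp T)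

/-- Evaluation of a Boolean expression at an atom (`α ≤ b`). -/
def BExp.eval (α : Atom T) : BExp T → Bool
  | .zero => false
  | .one => true
  | .test t => α t
  | .not b => !(b.eval α)
  | .or b₁ b₂ => b₁.eval α || b₂.eval α
  | .and b₁ b₂ => b₁.eval α && b₂.eval α

/-- KAT expressions over actions `Σ = A` and tests `T`. -/
inductive KExp (T A : Type) where
  | act (p : A)
  | test (b : BExp T)
  | plus (e₁ e₂ : KExp T A)
  | cat (e₁ e₂ : KExp T A)
  | star (e : KExp T A)

/-- Guarded-string semantics of a KAT expression. -/
def gs : KExp T A → Set (GStr T A)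
  | .act p => {z | ∃ α β, z = ⟨[(α, p)], β⟩}
  | .test b => {z | z.pairs = [] ∧ b.eval z.last = true}
  | .plus e₁ e₂ => gs e₁ ∪ gs e₂
  | .cat e₁ e₂ => fprod (gs e₁) (gs e₂)
  | .star e => fstar (gs e)

/-- Syntactic evaluation `E_α`. -/
def Eps (α : Atom T) : KExp T A → Bool
  | .act _ => false
  | .test b => b.eval α
  | .plus e₁ e₂ => Eps α e₁ || Eps α e₂
  | .cat e₁ e₂ => Eps α e₁ && Eps α e₂
  | .star _ => true

/-- `Γ · e`, with `Γ·0 = ∅` and `Γ·1 = Γ`. -/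
def prodSet (Γ : Set (KExp T A)) : KExp T A → Set (KExp T A)
  | .test .zero => ∅
  | .test .one => Γ
  | e => {x | ∃ e' ∈ Γ, x = .cat e' e}

/-- Partial derivatives `Δ_{αp}(e)`. -/
def pd (α : Atom T) (p : A) : KExp T A → Set (KExp T A)
  | .act p' => if p = p' then {.test .one} else ∅
  | .test _ => ∅
  | .plus e₁ e₂ => pd α p e₁ ∪ pd α p e₂
  | .cat e₁ e₂ => prodSet (pd α p e₁) e₂ ∪ (if Eps α e₁ then pd α p e₂ else ∅)
  | .star e => prodSet (pd α p e) (.star e)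

/-- Guarded-string semantics of a set of expressions. -/
def gsSet (E : Set (KExp T A)) : Set (GStr T A) := ⋃ e ∈ E, gs e

/-- Partial derivative of a set of expressions. -/
def pdS (α : Atom T) (p : A) (E : Set (KExp T A)) : Set (KExp T A) :=
  ⋃ e ∈ E, pd α p e

/-- Iterated partial derivative `Δ̂_w(e)` along a word `w ∈ (At·Σ)*`. -/
def pdWord (w : List (Atom T × A)) (e : KExp T A) : Set (KExp T A) :=
  w.foldl (fun E x => pdS x.1 x.2 E) {e}

/-- The closure `PD(e)`. -/
def PD : KExp T A → Set (KExp T A)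
  | .test b => {.test b}
  | .act p => {.act p, .test .one}
  | .plus e₁ e₂ => {.plus e₁ e₂} ∪ PD e₁ ∪ PD e₂
  | .cat e₁ e₂ => {.cat e₁ e₂} ∪ prodSet (PD e₁) e₂ ∪ PD e₂
  | .star e => {.star e} ∪ prodSet (PD e) (.star e)

/-- Number of symbols in the syntactic tree of a Boolean expression. -/
def BExp.size : BExp T → ℕ
  | .zero => 1 | .one => 1 | .test _ => 1
  | .not b => b.size + 1
  | .or b₁ b₂ => b₁.size + b₂.size + 1
  | .and b₁ b₂ => b₁.size + b₂.size + 1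

/-- Number of symbols in the syntactic tree of a KAT expression. -/
def KExp.size : KExp T A → ℕ
  | .act _ => 1
  | .test b => b.size
  | .plus e₁ e₂ => e₁.size + e₂.size + 1
  | .cat e₁ e₂ => e₁.size + e₂.size + 1
  | .star e => e.size + 1

/-- A set of assumptions `Γ`: equations `b p b̄' = 0` and inequalities `c ≤ c'`. -/
structure Gamma (T A : Type) where
  eqns : List (BExp T × A × BExp T)
  ineqs : List (BExp T × BExp T)

/-- `α ∈ At^Γ`. -/
def inAtG (G : Gamma T A) (α : Atom T) : Bool :=
  G.ineqs.all fun cc => !(cc.1.eval α) || cc.2.eval α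

/-- The atoms of `At^Γ`, viewed as guarded strings. -/
def atomsG (G : Gamma T A) : Set (GStr T A) := {z | z.pairs = [] ∧ inAtG G z.last = true}

/-- Γ-restricted fusion powers (base case `At^Γ`). -/
def fpowG (G : Gamma T A) (X : Set (GStr T A)) : ℕ → Set (GStr T A)
  | 0 => atomsG G
  | n + 1 => fprod X (fpowG G X n)

def fstarG (G : Gamma T A) (X : Set (GStr T A)) : Set (GStr T A) := ⋃ n, fpowG G X n

/-- The Γ-restricted guarded-string semantics `GS^Γ`. -/
def gsG (G : Gamma T A) : KExp T A → Set (GStr T A)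
  | .act p => {z | ∃ α β, inAtG G α = true ∧ inAtG G β = true ∧
      (∀ x ∈ G.eqns, x.2.1 = p → x.1.eval α = true → x.2.2.eval β = true) ∧
      z = ⟨[(α, p)], β⟩}
  | .test b => {z | z.pairs = [] ∧ inAtG G z.last = true ∧ b.eval z.last = true}
  | .plus e₁ e₂ => gsG G e₁ ∪ gsG G e₂
  | .cat e₁ e₂ => fprod (gsG G e₁) (gsG G e₂)
  | .star e => fstarG G (gsG G e)

def gsSetG (G : Gamma T A) (E : Set (KExp T A)) : Set (GStr T A) := ⋃ e ∈ E, gsG G e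

/-- Sum of a list of KAT expressions. -/
def sumList (l : List (KExp T A)) : KExp T A := l.foldr .plus (.test .zero)

/-- The universal expression `u = (p₁ + ⋯ + p_k)*`. -/
def uExp (ps : List A) : KExp T A := .star (sumList (ps.map .act))

/-- `r = Σᵢ bᵢpᵢb̄ᵢ' + Σⱼ cⱼc̄ⱼ'`. -/
def rExp (G : Gamma T A) : KExp T A :=
  sumList
    (G.eqns.map (fun x => .cat (.cat (.test x.1) (.act x.2.1)) (.test (.not x.2.2))) ++
     G.ineqs.map (fun x => .cat (.test x.1) (.test (.not x.2))))

/-- The expression `u r u`. -/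
def uru (G : Gamma T A) (ps : List A) : KExp T A :=
  .cat (.cat (uExp ps) (rExp G)) (uExp ps)

/-- `Π{b' | (b p b̄' = 0) ∈ Γ, α ≤ b}` (equal to `1` if there are none). -/
def gammaProd (G : Gamma T A) (α : Atom T) (p : A) : BExp T :=
  ((G.eqns.filter fun x => decide (x.2.1 = p) && x.1.eval α).map fun x => x.2.2).foldr .and .one

def pdGaux (G : Gamma T A) (α : Atom T) (p : A) : KExp T A → Set (KExp T A)
  | .act p' => if p = p' then {.test (gammaProd G α p)} else ∅
  | .test _ => ∅
  | .plus e₁ e₂ => pdGaux G α p e₁ ∪ pdGaux G α p e₂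
  | .cat e₁ e₂ => prodSet (pdGaux G α p e₁) e₂ ∪ (if Eps α e₁ then pdGaux G α p e₂ else ∅)
  | .star e => prodSet (pdGaux G α p e) (.star e)

/-- The Γ-partial derivative `Δ^Γ_{αp}(e)`. -/
def pdG (G : Gamma T A) (α : Atom T) (p : A) (e : KExp T A) : Set (KExp T A) :=
  if inAtG G α then pdGaux G α p e else ∅

/-- The atoms occurring in a guarded string. -/
def atomsOf (x : GStr T A) : List (Atom T) := x.pairs.map Prod.fst ++ [x.last]

/-- The substrings `α p β` of a guarded string. -/
def triplesOf (x : GStr T A) : List (Atom T × A × Atom T) :=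
  List.zipWith (fun ap β => (ap.1, ap.2, β)) x.pairs
    ((x.pairs.map Prod.fst).drop 1 ++ [x.last])

/-- `Γ·e` on transition pairs, with `Γ·0 = ∅` and `Γ·1 = Γ`. -/
def prodPairs (Γ : Set ((Atom T × A) × KExp T A)) :
    KExp T A → Set ((Atom T × A) × KExp T A)
  | .test .zero => ∅
  | .test .one => Γ
  | e => {x | ∃ y ∈ Γ, x = (y.1, .cat y.2 e)}

/-- The transition function `𝖿`. -/
def fset : KExp T A → Set ((Atom T × A) × KExp T A)
  | .act p => {x | ∃ α : Atom T, x = ((α, p), .test .one)}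
  | .test _ => ∅
  | .plus e₁ e₂ => fset e₁ ∪ fset e₂
  | .cat e₁ e₂ => prodPairs (fset e₁) e₂ ∪ {x ∈ fset e₂ | Eps x.1.1 e₁ = true}
  | .star e => prodPairs (fset e) (.star e)

/-- `der_{αp}(e) = {e' | (αp, e') ∈ 𝖿(e)}`. -/
def der (α : Atom T) (p : A) (e : KExp T A) : Set (KExp T A) :=
  {e' | ((α, p), e') ∈ fset e}

end KAT

/-! Every partial derivative of `e` already lies in `PD(e)`, and `PD` is transitive:
`e' ∈ PD(e)` implies `PD(e') ⊆ PD(e)`. Both are structural inductions on `e`; the only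
subtlety is that `Γ · f` collapses when `f` is `0` or `1`, so a member of `Γ · f` is either a
member of `Γ` (when `f = 1`) or of the form `g f` with `g ∈ Γ`. -/

namespace KAT

variable {T A : Type}

theorem prodSet_mono {Γ Δ : Set (KExp T A)} (h : Γ ⊆ Δ) (f : KExp T A) :
    prodSet Γ f ⊆ prodSet Δ f := by
  match f with
  | .test .zero => exact subset_rfl
  | .test .one => exact h
  | .test (.test _) | .test (.not _) | .test (.or _ _) | .test (.and _ _)
  | .act _ | .plus _ _ | .cat _ _ | .star _ =>
    rintro _ ⟨g, hg, rfl⟩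
    exact ⟨g, h hg, rfl⟩

theorem eq_one_or_eq_cat_of_mem_prodSet {Γ : Set (KExp T A)} {f x : KExp T A}
    (hx : x ∈ prodSet Γ f) : (f = .test .one ∧ x ∈ Γ) ∨ ∃ g ∈ Γ, x = .cat g f := by
  match f with
  | .test .zero => exact hx.elim
  | .test .one => exact Or.inl ⟨rfl, hx⟩
  | .test (.test _) | .test (.not _) | .test (.or _ _) | .test (.and _ _)
  | .act _ | .plus _ _ | .cat _ _ | .star _ => exact Or.inr hx

theorem pd_subset_PD_self [DecidableEq A] (α : Atom T) (p : A) (e : KExp T A) :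
    pd α p e ⊆ PD e := by
  induction e with
  | act q =>
    simp only [pd, PD]
    split_ifs
    · exact Set.singleton_subset_iff.mpr (Or.inr rfl)
    · exact Set.empty_subset _
  | test b => exact Set.empty_subset _
  | plus e₁ e₂ ih₁ ih₂ =>
    exact Set.union_subset_union (ih₁.trans Set.subset_union_right) ih₂
  | cat e₁ e₂ ih₁ ih₂ =>
    refine Set.union_subset_union ((prodSet_mono ih₁ e₂).trans Set.subset_union_right) ?_
    split_ifs
    · exact ih₂
    · exact Set.empty_subset _
  | star e ih => exact (prodSet_mono ih _).trans Set.subset_union_right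

theorem PD_subset_PD_of_mem {e e' : KExp T A} (h : e' ∈ PD e) : PD e' ⊆ PD e := by
  induction e generalizing e' with
  | act q =>
    rcases h with rfl | rfl
    · exact subset_rfl
    · exact Set.singleton_subset_iff.mpr (Or.inr rfl)
  | test b =>
    rw [h]
  | plus e₁ e₂ ih₁ ih₂ =>
    rcases h with (rfl | h) | h
    · exact subset_rfl
    · exact (ih₁ h).trans (Set.subset_union_right.trans Set.subset_union_left)
    · exact (ih₂ h).trans Set.subset_union_right
  | cat e₁ e₂ ih₁ ih₂ =>
    have h₁ : prodSet (PD e₁) e₂ ⊆ PD (.cat e₁ e₂) :=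
      Set.subset_union_right.trans Set.subset_union_left
    have h₂ : PD e₂ ⊆ PD (.cat e₁ e₂) := Set.subset_union_right
    rcases h with (rfl | h) | h
    · exact subset_rfl
    · rcases eq_one_or_eq_cat_of_mem_prodSet h with ⟨rfl, h⟩ | ⟨g, hg, rfl⟩
      · exact (ih₁ h).trans h₁
      · refine Set.union_subset (Set.union_subset ?_ ((prodSet_mono (ih₁ hg) e₂).trans h₁)) h₂
        exact Set.singleton_subset_iff.mpr (h₁ h)
    · exact (ih₂ h).trans h₂
  | star e ih =>
    have hstar : prodSet (PD e) (.star e) ⊆ PD (.star e) := Set.subset_union_right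
    rcases h with rfl | h
    · exact subset_rfl
    · rcases eq_one_or_eq_cat_of_mem_prodSet h with ⟨hone, _⟩ | ⟨g, hg, rfl⟩
      · cases hone
      · refine Set.union_subset (Set.union_subset ?_ ((prodSet_mono (ih hg) _).trans hstar)) ?_
        · exact Set.singleton_subset_iff.mpr (hstar h)
        · exact subset_rfl

end KAT

open KAT in
/-- `PD(e)` is closed under partial derivatives. -/
theorem pd_subset_PD {T A : Type} [DecidableEq A] (e e' : KExp T A)
    (h : e' ∈ PD e) (α : Atom T) (p : A) :
    pd α p e' ⊆ PD e :=
  (pd_subset_PD_self α p e').trans (PD_subset_PD_of_mem h)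
end

section
/- Two KAT expressions e₁ and e₂ have the same guarded-string semantics, GS(e₁) = GS(e₂), if and only if for every atom α, E_α(e₁) = E_α(e₂), and for every atom α and action p, GS(Δ_{αp}(e₁)) = GS(Δ_{αp}(e₂)). -/
namespace KAT

variable {T A : Type}

theorem gsSet_empty : gsSet (∅ : Set (KExp T A)) = ∅ :=
  Set.biUnion_empty gs

theorem gsSet_singleton (e : KExp T A) : gsSet {e} = gs e :=
  Set.biUnion_singleton e gs

theorem gsSet_union (E F : Set (KExp T A)) : gsSet (E ∪ F) = gsSet E ∪ gsSet F :=
  Set.biUnion_union E F gs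

theorem fprod_empty_right (X : Set (GStr T A)) : fprod X ∅ = ∅ := by
  simp [fprod]

theorem fprod_atomsGS (X : Set (GStr T A)) : fprod X atomsGS = X := by
  ext z
  constructor
  · rintro ⟨⟨xs, β⟩, hx, ⟨ys, γ⟩, rfl : ys = [], rfl : β = γ, rfl⟩
    simpa using hx
  · exact fun hz => ⟨z, hz, ⟨[], z.last⟩, rfl, rfl, by simp⟩

theorem fprod_biUnion_left {ι : Type*} (s : Set ι) (X : ι → Set (GStr T A))
    (Y : Set (GStr T A)) : fprod (⋃ i ∈ s, X i) Y = ⋃ i ∈ s, fprod (X i) Y := by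
  ext z
  simp only [fprod, Set.mem_iUnion₂, Set.mem_ofPred_eq]
  grind

theorem atom_mem_fprod {X Y : Set (GStr T A)} {α : Atom T} :
    (⟨[], α⟩ : GStr T A) ∈ fprod X Y ↔ (⟨[], α⟩ : GStr T A) ∈ X ∧ (⟨[], α⟩ : GStr T A) ∈ Y := by
  constructor
  · rintro ⟨⟨xs, β⟩, hx, ⟨ys, γ⟩, hy, hlast, h⟩
    obtain ⟨hnil, rfl⟩ := GStr.mk.inj h
    obtain ⟨rfl, rfl⟩ := List.append_eq_nil_iff.mp hnil.symm
    simp only [GStr.first] at hlast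
    subst hlast
    exact ⟨hx, hy⟩
  · rintro ⟨hx, hy⟩
    exact ⟨_, hx, _, hy, rfl, by simp⟩

theorem gs_test_zero : gs (.test .zero : KExp T A) = ∅ := by
  simp [gs, BExp.eval]

theorem gs_test_one : gs (.test .one : KExp T A) = atomsGS := by
  simp [gs, atomsGS, BExp.eval]

theorem gsSet_setOf_cat (Γ : Set (KExp T A)) (e : KExp T A) :
    gsSet {x | ∃ e' ∈ Γ, x = .cat e' e} = fprod (gsSet Γ) (gs e) := by
  rw [gsSet, gsSet, fprod_biUnion_left]
  ext z
  simp [gs]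

theorem gsSet_prodSet (Γ : Set (KExp T A)) (e : KExp T A) :
    gsSet (prodSet Γ e) = fprod (gsSet Γ) (gs e) := by
  rcases e with _ | (_ | _ | _ | _ | _ | _) | _ | _ | _
  case test.zero => rw [gs_test_zero, fprod_empty_right]; exact gsSet_empty
  case test.one => rw [gs_test_one, fprod_atomsGS]; rfl
  all_goals exact gsSet_setOf_cat Γ _

theorem eps_eq_true_iff (α : Atom T) (e : KExp T A) :
    Eps α e = true ↔ (⟨[], α⟩ : GStr T A) ∈ gs e := by
  induction e with
  | act p => simp [Eps, gs]
  | test b => simp [Eps, gs]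
  | plus e₁ e₂ ih₁ ih₂ => simp [Eps, gs, ih₁, ih₂]
  | cat e₁ e₂ ih₁ ih₂ => simp [Eps, gs, ih₁, ih₂, atom_mem_fprod]
  | star e => simpa [Eps, gs, fstar] using ⟨0, rfl⟩

theorem eps_eq_eps_iff (α : Atom T) (e₁ e₂ : KExp T A) :
    Eps α e₁ = Eps α e₂ ↔ ((⟨[], α⟩ : GStr T A) ∈ gs e₁ ↔ (⟨[], α⟩ : GStr T A) ∈ gs e₂) := by
  rw [Bool.eq_iff_iff, eps_eq_true_iff, eps_eq_true_iff]

theorem gderiv_atomsGS (α : Atom T) (p : A) : gderiv α p (atomsGS : Set (GStr T A)) = ∅ := by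
  ext z
  simp [gderiv, atomsGS]

theorem gderiv_fprod (α : Atom T) (p : A) (X Y : Set (GStr T A)) :
    gderiv α p (fprod X Y) =
      fprod (gderiv α p X) Y ∪ {z ∈ gderiv α p Y | (⟨[], α⟩ : GStr T A) ∈ X} := by
  ext ⟨zs, ω⟩
  simp only [gderiv, fprod, Set.mem_union, Set.mem_ofPred_eq]
  constructor
  · rintro ⟨⟨_ | ⟨a, xs⟩, β⟩, hx, ⟨ys, γ⟩, hy, hlast, h⟩
    all_goals simp only [GStr.mk.injEq, List.nil_append, List.cons_append, List.cons.injEq] at h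
    · obtain ⟨rfl, rfl⟩ := h
      obtain rfl : β = α := hlast
      exact Or.inr ⟨hy, hx⟩
    · obtain ⟨⟨rfl, rfl⟩, rfl⟩ := h
      exact Or.inl ⟨⟨xs, β⟩, hx, ⟨ys, ω⟩, hy, hlast, rfl⟩
  · rintro (⟨x, hx, y, hy, hlast, h⟩ | ⟨hy, hx⟩)
    · obtain ⟨rfl, rfl⟩ := GStr.mk.inj h
      exact ⟨⟨(α, p) :: x.pairs, x.last⟩, hx, y, hy, hlast, rfl⟩
    · exact ⟨⟨[], α⟩, hx, ⟨(α, p) :: zs, ω⟩, hy, rfl, rfl⟩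

theorem gderiv_fstar (α : Atom T) (p : A) (X : Set (GStr T A)) :
    gderiv α p (fstar X) = fprod (gderiv α p X) (fstar X) := by
  have gderiv_fpow : ∀ n, gderiv α p (fpow X n) ⊆ fprod (gderiv α p X) (fstar X) := by
    intro n
    induction n with
    | zero => simp [fpow, gderiv_atomsGS]
    | succ n ih =>
      rw [fpow, gderiv_fprod]
      refine Set.union_subset ?_ fun z hz => ih hz.1
      rintro _ ⟨x, hx, y, hy, hlast, rfl⟩
      exact ⟨x, hx, y, Set.mem_iUnion.mpr ⟨n, hy⟩, hlast, rfl⟩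
  refine Set.Subset.antisymm (fun z hz => ?_) ?_
  · obtain ⟨n, hn⟩ := Set.mem_iUnion.mp hz
    exact gderiv_fpow n hn
  · rintro z ⟨x, hx, y, hy, hlast, rfl⟩
    obtain ⟨n, hn⟩ := Set.mem_iUnion.mp hy
    refine Set.mem_iUnion.mpr ⟨n + 1, ?_⟩
    rw [fpow]
    exact ⟨_, hx, y, hn, hlast, rfl⟩

theorem set_eq_iff_atoms_and_gderiv {X Y : Set (GStr T A)} :
    X = Y ↔ (∀ α : Atom T, (⟨[], α⟩ : GStr T A) ∈ X ↔ (⟨[], α⟩ : GStr T A) ∈ Y) ∧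
      ∀ (α : Atom T) (p : A), gderiv α p X = gderiv α p Y := by
  refine ⟨by rintro rfl; simp, fun ⟨hatoms, hderiv⟩ => ?_⟩
  ext ⟨_ | ⟨⟨α, p⟩, w⟩, β⟩
  · exact hatoms β
  · exact Set.ext_iff.mp (hderiv α p) ⟨w, β⟩

theorem gsSet_pd [DecidableEq A] (α : Atom T) (p : A) (e : KExp T A) :
    gsSet (pd α p e) = gderiv α p (gs e) := by
  induction e with
  | act q =>
    ext ⟨zs, ω⟩
    by_cases hpq : p = q
    · subst hpq
      simp [pd, gsSet_singleton, gs, gderiv, BExp.eval]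
    · simp [pd, hpq, gsSet_empty, gs, gderiv]
  | test b => ext z; simp [pd, gsSet_empty, gs, gderiv]
  | plus e₁ e₂ ih₁ ih₂ => rw [pd, gsSet_union, ih₁, ih₂]; rfl
  | cat e₁ e₂ ih₁ ih₂ =>
    rw [pd, gsSet_union, gsSet_prodSet, ih₁, gs, gderiv_fprod, ← eps_eq_true_iff]
    by_cases hε : Eps α e₁ = true <;> simp [hε, ih₂, gsSet_empty]
  | star e ih => rw [pd, gsSet_prodSet, ih, gs, gderiv_fstar]

end KAT

open KAT in
/-- Bisimulation characterization of guarded-string equivalence. -/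
theorem gs_eq_iff {T A : Type} [DecidableEq A] (e₁ e₂ : KExp T A) :
    gs e₁ = gs e₂ ↔
      (∀ α : Atom T, Eps α e₁ = Eps α e₂) ∧
      (∀ (α : Atom T) (p : A), gsSet (pd α p e₁) = gsSet (pd α p e₂)) := by
  simp only [eps_eq_eps_iff, gsSet_pd]
  exact set_eq_iff_atoms_and_gderiv
end

section
/- Let Γ be a set of assumptions consisting of equations bᵢpᵢb̄ᵢ' = 0 and inequalities cⱼ ≤ cⱼ' between Boolean expressions. Then for every KAT expression e, GS^Γ(e) = GS(e) \ GS(uru), where u = (p₁ + ⋯ + p_k)* ranges over all action symbols and r = Σᵢ bᵢpᵢb̄ᵢ' + Σⱼ cⱼc̄ⱼ'. -/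
/-! A guarded string belongs to `GS^Γ(e)` iff it belongs to `GS(e)` and is *admissible*: its atoms
lie in `At^Γ` and each of its substrings `αpβ` respects the equations of `Γ`. Admissibility is
compatible with fusion, which makes `GS^Γ` the admissible part of `GS` by induction on `e`. On the
other hand, since `u` denotes every guarded string, `GS(uru)` consists of the strings having a
factor in `GS(r)`, and the elements of `GS(r)` are exactly the minimal violations of
admissibility: an atom outside `At^Γ`, or a substring `αpβ` with `α ≤ b` and `β ≰ b'` for some
`bpb̄' = 0` in `Γ`. -/

namespace KAT

variable {T A : Type}

def EqnsHold (G : Gamma T A) (α : Atom T) (p : A) (β : Atom T) : Prop :=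
  ∀ x ∈ G.eqns, x.2.1 = p → x.1.eval α = true → x.2.2.eval β = true

def AdmissiblePairs (G : Gamma T A) : List (Atom T × A) → Atom T → Prop
  | [], β => inAtG G β = true
  | (α, p) :: l, β =>
      inAtG G α = true ∧ EqnsHold G α p (GStr.first ⟨l, β⟩) ∧ AdmissiblePairs G l β

def GStr.Admissible (G : Gamma T A) (z : GStr T A) : Prop := AdmissiblePairs G z.pairs z.last

section Admissible

variable {G : Gamma T A}

lemma GStr.first_append (l₁ l₂ : List (Atom T × A)) (β : Atom T) :
    GStr.first (⟨l₁ ++ l₂, β⟩ : GStr T A) =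
      GStr.first ⟨l₁, GStr.first ⟨l₂, β⟩⟩ := by
  rcases l₁ with _ | ⟨⟨α, p⟩, l⟩ <;> rfl

lemma AdmissiblePairs.inAtG_first {l : List (Atom T × A)} {β : Atom T}
    (h : AdmissiblePairs G l β) : inAtG G (GStr.first ⟨l, β⟩) = true := by
  rcases l with _ | ⟨⟨α, p⟩, l⟩
  exacts [h, h.1]

lemma admissiblePairs_append (l₁ l₂ : List (Atom T × A)) (β : Atom T) :
    AdmissiblePairs G (l₁ ++ l₂) β ↔
      AdmissiblePairs G l₁ (GStr.first ⟨l₂, β⟩) ∧ AdmissiblePairs G l₂ β := by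
  induction l₁ with
  | nil => exact ⟨fun h => ⟨h.inAtG_first, h⟩, And.right⟩
  | cons a l ih =>
    obtain ⟨α, p⟩ := a
    simp only [List.cons_append, AdmissiblePairs, ih, GStr.first_append]
    tauto

lemma GStr.admissible_fuse {x y : GStr T A} (hxy : x.last = y.first) :
    GStr.Admissible G ⟨x.pairs ++ y.pairs, y.last⟩ ↔ x.Admissible G ∧ y.Admissible G := by
  rw [GStr.Admissible, admissiblePairs_append, GStr.Admissible, hxy]
  rfl

end Admissible

lemma fprod_sep {P : GStr T A → Prop}
    (hP : ∀ x y : GStr T A, x.last = y.first →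
      (P ⟨x.pairs ++ y.pairs, y.last⟩ ↔ P x ∧ P y))
    (X Y : Set (GStr T A)) :
    fprod {x ∈ X | P x} {y ∈ Y | P y} = {z ∈ fprod X Y | P z} := by
  ext z
  constructor
  · rintro ⟨x, ⟨hx, hPx⟩, y, ⟨hy, hPy⟩, hxy, rfl⟩
    exact ⟨⟨x, hx, y, hy, hxy, rfl⟩, (hP x y hxy).2 ⟨hPx, hPy⟩⟩
  · rintro ⟨⟨x, hx, y, hy, hxy, rfl⟩, hz⟩
    obtain ⟨hPx, hPy⟩ := (hP x y hxy).1 hz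
    exact ⟨x, ⟨hx, hPx⟩, y, ⟨hy, hPy⟩, hxy, rfl⟩

section Restriction

variable (G : Gamma T A)

lemma fprod_admissible (X Y : Set (GStr T A)) :
    fprod {x ∈ X | x.Admissible G} {y ∈ Y | y.Admissible G} =
      {z ∈ fprod X Y | z.Admissible G} :=
  fprod_sep (fun _ _ => GStr.admissible_fuse) X Y

lemma atomsG_eq_admissible : atomsG G = {z ∈ (atomsGS : Set (GStr T A)) | z.Admissible G} := by
  ext ⟨l, β⟩
  constructor
  · rintro ⟨rfl, hβ⟩
    exact ⟨rfl, hβ⟩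
  · rintro ⟨hl, hβ⟩
    subst hl
    exact ⟨rfl, hβ⟩

lemma fpowG_admissible (X : Set (GStr T A)) (n : ℕ) :
    fpowG G {x ∈ X | x.Admissible G} n = {z ∈ fpow X n | z.Admissible G} := by
  induction n with
  | zero => exact atomsG_eq_admissible G
  | succ n ih => rw [fpowG, ih, fprod_admissible]; rfl

lemma fstarG_admissible (X : Set (GStr T A)) :
    fstarG G {x ∈ X | x.Admissible G} = {z ∈ fstar X | z.Admissible G} := by
  ext z
  simp only [fstarG, fstar, fpowG_admissible, Set.mem_iUnion, Set.mem_ofPred_eq, exists_and_right]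

lemma gsG_eq_admissible (e : KExp T A) : gsG G e = {z ∈ gs e | z.Admissible G} := by
  induction e with
  | act p =>
    ext z
    constructor
    · rintro ⟨α, β, hα, hβ, hp, rfl⟩
      exact ⟨⟨α, β, rfl⟩, hα, hp, hβ⟩
    · rintro ⟨⟨α, β, rfl⟩, hα, hp, hβ⟩
      exact ⟨α, β, hα, hβ, hp, rfl⟩
  | test b =>
    ext ⟨l, β⟩
    constructor
    · rintro ⟨rfl, hβ, hb⟩
      exact ⟨⟨rfl, hb⟩, hβ⟩
    · rintro ⟨⟨rfl, hb⟩, hβ⟩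
      exact ⟨rfl, hβ, hb⟩
  | plus e₁ e₂ ih₁ ih₂ => rw [gsG, gs, ih₁, ih₂]; exact Set.sep_union.symm
  | cat e₁ e₂ ih₁ ih₂ => rw [gsG, gs, ih₁, ih₂, fprod_admissible]
  | star e ih => rw [gsG, gs, ih, fstarG_admissible]

end Restriction

lemma mem_gs_sumList {l : List (KExp T A)} {z : GStr T A} :
    z ∈ gs (sumList l) ↔ ∃ e ∈ l, z ∈ gs e := by
  induction l with
  | nil => simp [sumList, gs, BExp.eval]
  | cons e l ih =>
    change z ∈ gs e ∪ gs (sumList l) ↔ _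
    simp [ih]

lemma gs_uExp {ps : List A} (hps : ∀ p : A, p ∈ ps) :
    gs (uExp ps) = (Set.univ : Set (GStr T A)) := by
  refine Set.eq_univ_of_forall fun ⟨l, β⟩ => ?_
  induction l with
  | nil => exact Set.mem_iUnion.2 ⟨0, rfl⟩
  | cons a l ih =>
    obtain ⟨n, hn⟩ := Set.mem_iUnion.1 ih
    refine Set.mem_iUnion.2
      ⟨n + 1, ⟨[a], GStr.first ⟨l, β⟩⟩, ?_, ⟨l, β⟩, hn, rfl, rfl⟩
    exact mem_gs_sumList.2 ⟨.act a.2, List.mem_map.2 ⟨a.2, hps a.2, rfl⟩, a.1, _, rfl⟩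

lemma mem_gs_test_cat {b : BExp T} {e : KExp T A} {z : GStr T A} :
    z ∈ gs (.cat (.test b) e) ↔ b.eval z.first = true ∧ z ∈ gs e := by
  constructor
  · rintro ⟨⟨_, β⟩, ⟨rfl, hb⟩, y, hy, rfl, rfl⟩
    exact ⟨hb, hy⟩
  · rintro ⟨hb, hz⟩
    exact ⟨⟨[], z.first⟩, ⟨rfl, hb⟩, z, hz, rfl, rfl⟩

lemma mem_gs_cat_test {e : KExp T A} {b : BExp T} {z : GStr T A} :
    z ∈ gs (.cat e (.test b)) ↔ z ∈ gs e ∧ b.eval z.last = true := by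
  constructor
  · rintro ⟨x, hx, ⟨_, β⟩, ⟨rfl, hb⟩, rfl, rfl⟩
    simpa using And.intro hx hb
  · rintro ⟨hz, hb⟩
    exact ⟨z, hz, ⟨[], z.last⟩, ⟨rfl, hb⟩, rfl, by simp⟩

lemma inAtG_eq_false_iff {G : Gamma T A} {α : Atom T} :
    inAtG G α = false ↔ ∃ c ∈ G.ineqs, c.1.eval α = true ∧ c.2.eval α = false := by
  simp [inAtG]

lemma not_eqnsHold_iff {G : Gamma T A} {α : Atom T} {p : A} {β : Atom T} :
    ¬ EqnsHold G α p β ↔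
      ∃ x ∈ G.eqns, x.2.1 = p ∧ x.1.eval α = true ∧ x.2.2.eval β = false := by
  simp [EqnsHold]

lemma mem_gs_rExp {G : Gamma T A} {z : GStr T A} :
    z ∈ gs (rExp G) ↔
      (∃ α p β, z = ⟨[(α, p)], β⟩ ∧ ¬ EqnsHold G α p β) ∨
        (z.pairs = [] ∧ inAtG G z.last = false) := by
  simp only [rExp, mem_gs_sumList, List.mem_append, List.mem_map, or_and_right, exists_or,
    inAtG_eq_false_iff, not_eqnsHold_iff]
  simp only [exists_exists_and_eq_and, mem_gs_cat_test, mem_gs_test_cat]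
  refine or_congr ⟨?_, ?_⟩ ⟨?_, ?_⟩
  · rintro ⟨q, hq, ⟨h₁, α, β, rfl⟩, h₂⟩
    exact ⟨α, q.2.1, β, rfl, q, hq, rfl, h₁, by simpa [BExp.eval] using h₂⟩
  · rintro ⟨α, p, β, rfl, q, hq, rfl, h₁, h₂⟩
    exact ⟨q, hq, ⟨h₁, α, β, rfl⟩, by simp [BExp.eval, h₂]⟩
  · rintro ⟨c, hc, ⟨hz, h₁⟩, h₂⟩
    exact ⟨hz, c, hc, h₁, by simpa [BExp.eval] using h₂⟩
  · rintro ⟨hz, c, hc, h₁, h₂⟩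
    exact ⟨c, hc, ⟨hz, h₁⟩, by simp [BExp.eval, h₂]⟩

lemma not_admissible_of_mem_gs_rExp {G : Gamma T A} {w : GStr T A} (hw : w ∈ gs (rExp G)) :
    ¬ w.Admissible G := by
  rcases mem_gs_rExp.1 hw with ⟨α, p, β, rfl, hp⟩ | ⟨hw, hβ⟩
  · exact fun h => hp h.2.1
  · rw [GStr.Admissible, hw]
    simp [AdmissiblePairs, hβ]

section Factor

variable {R : Set (GStr T A)}

lemma fuse_mem_fprod_univ {w y : GStr T A} (hw : w ∈ R) (hwy : w.last = y.first) :
    (⟨w.pairs ++ y.pairs, y.last⟩ : GStr T A) ∈ fprod (fprod Set.univ R) Set.univ :=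
  ⟨w, ⟨⟨[], w.first⟩, trivial, w, hw, rfl, rfl⟩, y, trivial, hwy, rfl⟩

lemma cons_mem_fprod_univ {a : Atom T × A} {l : List (Atom T × A)} {β : Atom T}
    (h : (⟨l, β⟩ : GStr T A) ∈ fprod (fprod Set.univ R) Set.univ) :
    (⟨a :: l, β⟩ : GStr T A) ∈ fprod (fprod Set.univ R) Set.univ := by
  obtain ⟨_, ⟨x, -, w, hw, hxw, rfl⟩, y, -, hwy, hz⟩ := h
  cases hz
  exact ⟨_, ⟨⟨a :: x.pairs, x.last⟩, trivial, w, hw, hxw, rfl⟩, y, trivial, hwy, rfl⟩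

end Factor

lemma mem_fprod_univ_gs_rExp_of_not_admissible {G : Gamma T A} {z : GStr T A}
    (hz : ¬ z.Admissible G) : z ∈ fprod (fprod Set.univ (gs (rExp G))) Set.univ := by
  obtain ⟨l, β⟩ := z
  induction l with
  | nil =>
    exact fuse_mem_fprod_univ (y := ⟨[], β⟩)
      (mem_gs_rExp.2 (Or.inr ⟨rfl, Bool.eq_false_iff.2 hz⟩)) rfl
  | cons a l ih =>
    obtain ⟨α, p⟩ := a
    by_cases hα : inAtG G α = true
    swap
    · exact fuse_mem_fprod_univ (w := ⟨[], α⟩) (y := ⟨(α, p) :: l, β⟩)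
        (mem_gs_rExp.2 (Or.inr ⟨rfl, Bool.eq_false_iff.2 hα⟩)) rfl
    by_cases hp : EqnsHold G α p (GStr.first ⟨l, β⟩)
    · exact cons_mem_fprod_univ (ih fun hl => hz ⟨hα, hp, hl⟩)
    · exact fuse_mem_fprod_univ (y := ⟨l, β⟩)
        (mem_gs_rExp.2 (Or.inl ⟨α, p, _, rfl, hp⟩)) rfl

lemma mem_gs_uru_iff_not_admissible {G : Gamma T A} {ps : List A} (hps : ∀ p : A, p ∈ ps)
    {z : GStr T A} : z ∈ gs (uru G ps) ↔ ¬ z.Admissible G := by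
  rw [uru, gs, gs, gs_uExp hps]
  refine ⟨?_, mem_fprod_univ_gs_rExp_of_not_admissible⟩
  rintro ⟨v, ⟨x, -, w, hw, hxw, rfl⟩, y, -, hwy, rfl⟩ hz
  have hv := ((GStr.admissible_fuse hwy).1 hz).1
  exact not_admissible_of_mem_gs_rExp hw ((GStr.admissible_fuse hxw).1 hv).2

end KAT

open KAT in
theorem gsG_eq_gs_diff_uru_general {T A : Type}
    (G : Gamma T A) (ps : List A) (hps : ∀ p : A, p ∈ ps) (e : KExp T A) :
    gsG G e = gs e \ gs (uru G ps) := by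
  rw [gsG_eq_admissible]
  ext z
  rw [Set.mem_sdiff, mem_gs_uru_iff_not_admissible hps, not_not]
  rfl

open KAT in
/-- `GS^Γ(e) = GS(e) \ GS(uru)`. -/
theorem gsG_eq_gs_diff_uru {T A : Type} [DecidableEq A]
    (G : Gamma T A) (ps : List A) (hps : ∀ p : A, p ∈ ps) (e : KExp T A) :
    gsG G e = gs e \ gs (uru G ps) :=
  gsG_eq_gs_diff_uru_general G ps hps e
end

section
/- The function 𝖿 mapping a KAT expression to its set of transition pairs agrees with partial derivatives: for all expressions e, atoms α and actions p, der_{αp}(e) := {e' | (αp, e') ∈ 𝖿(e)} equals Δ_{αp}(e). -/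
/-! `der_{αp}` satisfies the same structural recursion as `Δ_{αp}`, so the two agree by
induction on `e`. The only step that is not a mere unfolding is that selecting the `αp`-labelled
pairs commutes with the product `Γ·e`, including its special cases `e = 0` and `e = 1`. -/

namespace KAT

variable {T A : Type}

theorem setOf_mem_prodPairs (Γ : Set ((Atom T × A) × KExp T A)) (e : KExp T A)
    (a : Atom T × A) :
    {e' | (a, e') ∈ prodPairs Γ e} = prodSet {e' | (a, e') ∈ Γ} e := by
  match e with
  | .test .zero | .test .one => rfl
  | .test (.test _) | .test (.not _) | .test (.or _ _) | .test (.and _ _)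
  | .act _ | .plus _ _ | .cat _ _ | .star _ =>
    ext x
    constructor
    · rintro ⟨⟨a', e'⟩, he', heq⟩
      obtain ⟨rfl, rfl⟩ := Prod.mk.inj heq
      exact ⟨e', he', rfl⟩
    · rintro ⟨e', he', rfl⟩
      exact ⟨(a, e'), he', rfl⟩

section der

variable (α : Atom T) (p : A)

theorem der_act [DecidableEq A] (q : A) :
    der α p (.act q : KExp T A) = if p = q then {.test .one} else ∅ := by
  ext x
  split_ifs with hpq <;> simp [der, fset, hpq]

theorem der_test (b : BExp T) : der α p (.test b : KExp T A) = ∅ := rfl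

theorem der_plus (e₁ e₂ : KExp T A) : der α p (.plus e₁ e₂) = der α p e₁ ∪ der α p e₂ := rfl

theorem der_cat (e₁ e₂ : KExp T A) :
    der α p (.cat e₁ e₂) =
      prodSet (der α p e₁) e₂ ∪ (if Eps α e₁ then der α p e₂ else ∅) := by
  change {e' | ((α, p), e') ∈ prodPairs (fset e₁) e₂}
      ∪ {e' | ((α, p), e') ∈ fset e₂ ∧ Eps α e₁ = true} = _
  rw [setOf_mem_prodPairs]
  cases Eps α e₁ <;> simp [der]

theorem der_star (e : KExp T A) : der α p (.star e) = prodSet (der α p e) (.star e) :=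
  setOf_mem_prodPairs _ _ _

end der

end KAT

open KAT in
/-- The transition function `𝖿` agrees with partial derivatives:
`der_{αp}(e) = Δ_{αp}(e)`. -/
theorem der_eq_pd {T A : Type} [DecidableEq A]
    (e : KExp T A) (α : Atom T) (p : A) :
    der α p e = pd α p e := by
  induction e with
  | act q => exact der_act α p q
  | test b => exact der_test α p b
  | plus e₁ e₂ ih₁ ih₂ => rw [der_plus, ih₁, ih₂, pd]
  | cat e₁ e₂ ih₁ ih₂ => rw [der_cat, ih₁, ih₂, pd]
  | star e ih => rw [der_star, ih, pd]
end
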